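/- Let f, g ∈ ℝ[z₁,…,zₙ] be nonzero and K ⊂ ℝⁿ a proper cone. If g + i·f is K-stable, then the directional Wronskian W_v(f,g) = (∂_v f)·g − f·(∂_v g) satisfies W_v(f,g)(x) ≤ 0 for all x ∈ ℝⁿ and all v ∈ int K. -/

import Mathlib

/-!
Restrict to the complex line `x + t v` with `v ∈ int K`: for `Im t > 0` the imaginary part
`(Im t) v` lies in `int K`, so `Q(t) = G(t) + i F(t)` (with `F`, `G` the restrictions of `f`, `g`)
has all its roots in the closed lower half-plane. For real `t`, `Im (Q'(t) · conj Q(t))` equals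
`F' G − F G'`, which at `t = 0` is `W_v(f,g)(x)`. This quantity is a `|·|²`-weighted sum over the
factors of a product, and for a linear factor `t − r` it is `Im r ≤ 0`.
-/

open MvPolynomial

def KStable {n : ℕ} (K : Set (Fin n → ℝ)) (f : MvPolynomial (Fin n) ℂ) : Prop :=
  ∀ z : Fin n → ℂ, (fun j => (z j).im) ∈ interior K → MvPolynomial.eval z f ≠ 0

/-- Directional derivative `∂_v h = Σⱼ vⱼ ∂h/∂zⱼ`. -/
noncomputable def dirDeriv {n : ℕ} (v : Fin n → ℝ) (h : MvPolynomial (Fin n) ℝ) :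
    MvPolynomial (Fin n) ℝ :=
  ∑ j, C (v j) * pderiv j h

/-- The directional Wronskian `W_v(f,g) = (∂_v f) g − f (∂_v g)`. -/
noncomputable def wronskian {n : ℕ} (v : Fin n → ℝ) (f g : MvPolynomial (Fin n) ℝ) :
    MvPolynomial (Fin n) ℝ :=
  dirDeriv v f * g - f * dirDeriv v g

open scoped ComplexConjugate

section DirDeriv

variable {n : ℕ} (v : Fin n → ℝ)

lemma dirDeriv_C (a : ℝ) : dirDeriv v (C a) = 0 := by
  simp [dirDeriv]

lemma dirDeriv_X (i : Fin n) : dirDeriv v (X i) = C (v i) := by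
  simp [dirDeriv, pderiv_X, Pi.single_apply]

lemma dirDeriv_add (p q : MvPolynomial (Fin n) ℝ) :
    dirDeriv v (p + q) = dirDeriv v p + dirDeriv v q := by
  simp [dirDeriv, mul_add, Finset.sum_add_distrib]

lemma dirDeriv_mul (p q : MvPolynomial (Fin n) ℝ) :
    dirDeriv v (p * q) = dirDeriv v p * q + p * dirDeriv v q := by
  simp only [dirDeriv, pderiv_mul, mul_add, Finset.sum_add_distrib, Finset.sum_mul,
    Finset.mul_sum]
  congr 1 <;> exact Finset.sum_congr rfl fun _ _ => by ring

end DirDeriv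

noncomputable def restrictToLine {n : ℕ} (x v : Fin n → ℝ) :
    MvPolynomial (Fin n) ℝ →ₐ[ℝ] Polynomial ℝ :=
  aeval fun j => Polynomial.C (x j) + Polynomial.C (v j) * Polynomial.X

section RestrictToLine

variable {n : ℕ} (x v : Fin n → ℝ)

lemma derivative_restrictToLine (p : MvPolynomial (Fin n) ℝ) :
    Polynomial.derivative (restrictToLine x v p) = restrictToLine x v (dirDeriv v p) := by
  induction p using MvPolynomial.induction_on with
  | C a => simp [dirDeriv_C]
  | add p q hp hq => rw [map_add, Polynomial.derivative_add, hp, hq, dirDeriv_add, map_add]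
  | mul_X p j hp =>
    simp only [map_mul, Polynomial.derivative_mul, hp, dirDeriv_mul, dirDeriv_X, map_add]
    simp [restrictToLine]

lemma aeval_restrictToLine {A : Type*} [CommSemiring A] [Algebra ℝ A] (a : A)
    (p : MvPolynomial (Fin n) ℝ) :
    Polynomial.aeval a (restrictToLine x v p) =
      aeval (fun j => algebraMap ℝ A (x j) + a * algebraMap ℝ A (v j)) p := by
  rw [restrictToLine, comp_aeval_apply]
  congr 2 with j
  rw [map_add, map_mul, Polynomial.aeval_C, Polynomial.aeval_C, Polynomial.aeval_X, mul_comm]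

lemma eval_restrictToLine_zero (p : MvPolynomial (Fin n) ℝ) :
    (restrictToLine x v p).eval 0 = eval x p := by
  rw [← Polynomial.coe_aeval_eq_eval, aeval_restrictToLine]
  simp

lemma restrictToLine_wronskian (f g : MvPolynomial (Fin n) ℝ) :
    restrictToLine x v (wronskian v f g) =
      Polynomial.wronskian (restrictToLine x v g) (restrictToLine x v f) := by
  simp only [wronskian, Polynomial.wronskian, map_sub, map_mul, derivative_restrictToLine]
  ring

end RestrictToLine

section UpperHalfPlane

open Polynomial Complex

lemma im_eval_derivative_mul_conj_mul (A B : ℂ[X]) (z : ℂ) :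
    ((derivative (A * B)).eval z * conj ((A * B).eval z)).im =
      normSq (B.eval z) * ((derivative A).eval z * conj (A.eval z)).im +
        normSq (A.eval z) * ((derivative B).eval z * conj (B.eval z)).im := by
  have hsplit : (derivative (A * B)).eval z * conj ((A * B).eval z) =
      normSq (B.eval z) * ((derivative A).eval z * conj (A.eval z)) +
        normSq (A.eval z) * ((derivative B).eval z * conj (B.eval z)) := by
    simp only [derivative_mul, Polynomial.eval_add, Polynomial.eval_mul, map_mul, ← mul_conj]
    ring
  rw [hsplit, add_im, im_ofReal_mul, im_ofReal_mul]

lemma im_eval_derivative_mul_conj_nonpos {Q : ℂ[X]} (hQ : ∀ z : ℂ, 0 < z.im → Q.eval z ≠ 0)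
    (t : ℝ) : ((derivative Q).eval (t : ℂ) * conj (Q.eval (t : ℂ))).im ≤ 0 := by
  let P : ℂ[X] → Prop := fun A => ((derivative A).eval (t : ℂ) * conj (A.eval (t : ℂ))).im ≤ 0
  have hmul : ∀ A B, P A → P B → P (A * B) := fun A B hA hB => by
    simp only [P, im_eval_derivative_mul_conj_mul]
    exact add_nonpos (mul_nonpos_of_nonneg_of_nonpos (normSq_nonneg _) hA)
      (mul_nonpos_of_nonneg_of_nonpos (normSq_nonneg _) hB)
  have hroot : ∀ r ∈ Q.roots, P (Polynomial.X - Polynomial.C r) := fun r hr => by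
    have : r.im ≤ 0 := not_lt.mp fun hr' => hQ r hr' (isRoot_of_mem_roots hr)
    simpa [P] using this
  rw [(IsAlgClosed.splits Q).eq_prod_roots]
  exact hmul _ _ (by simp [P])
    (Multiset.prod_induction P _ hmul (by simp [P]) (Multiset.forall_mem_map_iff.mpr hroot))

lemma im_eval_derivative_mul_conj_eq_wronskian (F G : ℝ[X]) (t : ℝ) :
    let Q := G.map (algebraMap ℝ ℂ) + Polynomial.C I * F.map (algebraMap ℝ ℂ)
    ((derivative Q).eval (t : ℂ) * conj (Q.eval (t : ℂ))).im = (wronskian G F).eval t := by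
  have hreal : ∀ A : ℝ[X], (A.map (algebraMap ℝ ℂ)).eval (t : ℂ) = A.eval t := fun A => by
    rw [eval_map_algebraMap, ← coe_algebraMap, Polynomial.aeval_algebraMap_apply,
      Polynomial.coe_aeval_eq_eval]
  simp only [derivative_C_mul, derivative_map, Polynomial.eval_add,
    Polynomial.eval_mul, Polynomial.eval_C, hreal, map_add, map_mul, conj_ofReal, conj_I,
    Polynomial.eval_sub, Polynomial.wronskian]
  simp only [add_im, mul_im, add_re, mul_re, ofReal_re, ofReal_im, I_re, I_im, neg_re, neg_im]
  ring

end UpperHalfPlane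

open Pointwise in
lemma smul_mem_interior_of_forall_smul_mem {E : Type*} [AddCommGroup E] [Module ℝ E]
    [TopologicalSpace E] [ContinuousConstSMul ℝ E] {K : Set E}
    (hK : ∀ c : ℝ, 0 ≤ c → ∀ x ∈ K, c • x ∈ K) {v : E} (hv : v ∈ interior K) {c : ℝ}
    (hc : 0 < c) : c • v ∈ interior K := by
  have : c • v ∈ interior (c • K) := by
    rw [interior_smul₀ hc.ne']
    exact Set.smul_mem_smul_set hv
  refine interior_mono ?_ this
  rintro _ ⟨x, hx, rfl⟩
  exact hK c hc.le x hx

lemma KStable.eval_line_ne_zero {n : ℕ} {K : Set (Fin n → ℝ)}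
    (hK : ∀ c : ℝ, 0 ≤ c → ∀ x ∈ K, c • x ∈ K) {P : MvPolynomial (Fin n) ℂ} (hP : KStable K P)
    (x : Fin n → ℝ) {v : Fin n → ℝ} (hv : v ∈ interior K) {z : ℂ} (hz : 0 < z.im) :
    eval (fun j => (x j : ℂ) + z * v j) P ≠ 0 := by
  refine hP _ ?_
  convert smul_mem_interior_of_forall_smul_mem hK hv hz using 1
  ext j
  simp

theorem stmt11_general {n : ℕ} (K : Set (Fin n → ℝ))
    (hKcone : ∀ (c : ℝ), 0 ≤ c → ∀ x ∈ K, c • x ∈ K)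
    (f g : MvPolynomial (Fin n) ℝ)
    (h : KStable K (g.map (algebraMap ℝ ℂ) + C Complex.I * f.map (algebraMap ℝ ℂ))) :
    ∀ v ∈ interior K, ∀ x : Fin n → ℝ, MvPolynomial.eval x (wronskian v f g) ≤ 0 := by
  intro v hv x
  set F := restrictToLine x v f
  set G := restrictToLine x v g
  have hQ : ∀ z : ℂ, 0 < z.im →
      (G.map (algebraMap ℝ ℂ) + Polynomial.C Complex.I * F.map (algebraMap ℝ ℂ)).eval z ≠ 0 := by
    intro z hz
    simpa [F, G, Polynomial.eval_map_algebraMap, aeval_restrictToLine, MvPolynomial.aeval_def,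
      MvPolynomial.eval_map] using h.eval_line_ne_zero hKcone x hv hz
  rw [← eval_restrictToLine_zero, restrictToLine_wronskian,
    ← im_eval_derivative_mul_conj_eq_wronskian]
  exact im_eval_derivative_mul_conj_nonpos hQ 0

/-- If `g + i f` is `K`-stable, then `W_v(f,g) ≤ 0` on `ℝⁿ` for all `v ∈ int K`. -/
theorem stmt11 {n : ℕ} (K : Set (Fin n → ℝ))
    (hKcl : IsClosed K) (hKconv : Convex ℝ K)
    (hKcone : ∀ (c : ℝ), 0 ≤ c → ∀ x ∈ K, c • x ∈ K)
    (hKpointed : K ∩ (-K) ⊆ {0}) (hKfull : (interior K).Nonempty)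
    (f g : MvPolynomial (Fin n) ℝ) (hf : f ≠ 0) (hg : g ≠ 0)
    (h : KStable K (g.map (algebraMap ℝ ℂ) + C Complex.I * f.map (algebraMap ℝ ℂ))) :
    ∀ v ∈ interior K, ∀ x : Fin n → ℝ, MvPolynomial.eval x (wronskian v f g) ≤ 0 :=
  stmt11_general K hKcone f g h
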